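/- Let T₂₁ be a ν₂×μ₁ matrix and T₁₁ a ν₁×μ₁, T₂₂ a ν₂×μ₂ matrix over a field such that [T₁₁; T₂₁] has full column rank μ₁ and [T₂₁ T₂₂] has full row rank ν₂. Then the minimal rank of the partial matrix [[T₁₁, ?],[T₂₁, T₂₂]] equals μ₁ + ν₂ − rank T₂₁. -/

import Mathlib

/-!
Let `π` be the projection of `F^(ν₁ + ν₂)` onto the last `ν₂` coordinates and `V` the column space
of a completion `M = [[T₁₁, X], [T₂₁, T₂₂]]`. Then `π V` is the column space of `[T₂₁ T₂₂]`, and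
`V ∩ ker π` contains `C ∩ ker π`, where `C` is the column space of `[T₁₁; T₂₁]`; since `π C` is the
column space of `T₂₁`, this gives `rank M ≥ rank [T₂₁ T₂₂] + rank [T₁₁; T₂₁] - rank T₂₁` for every
`X`. Equality holds for `X = T₁₁ G T₂₂` with `G` a generalized inverse of `T₂₁`: a column
`(T₁₁ a + X b, T₂₁ a + T₂₂ b)` of `M` with vanishing bottom part is the column of `[T₁₁; T₂₁]`
at `a + G T₂₂ b`, so `V ∩ ker π = C ∩ ker π`.
-/

open Matrix Module LinearMap

theorem Submodule.finrank_map_add_finrank_inf_ker {K V V' : Type*} [DivisionRing K]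
    [AddCommGroup V] [Module K V] [AddCommGroup V'] [Module K V']
    (p : Submodule K V) [FiniteDimensional K p] (f : V →ₗ[K] V') :
    finrank K (p.map f) + finrank K ↥(p ⊓ ker f) = finrank K p := by
  rw [← range_domRestrict, ← finrank_range_add_finrank_ker (f.domRestrict p), ker_domRestrict,
    ← (Submodule.comapSubtypeEquivOfLe (inf_le_left : p ⊓ ker f ≤ p)).finrank_eq,
    Submodule.comap_inf, Submodule.comap_subtype_self, top_inf_eq]

theorem LinearMap.exists_comp_comp_eq_self {K V V' : Type*} [DivisionRing K]
    [AddCommGroup V] [Module K V] [AddCommGroup V'] [Module K V'] (f : V →ₗ[K] V') :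
    ∃ g : V' →ₗ[K] V, f ∘ₗ g ∘ₗ f = f := by
  obtain ⟨h, hh⟩ := f.rangeRestrict.exists_rightInverse_of_surjective f.range_rangeRestrict
  obtain ⟨g, hg⟩ := LinearMap.exists_extend h
  refine ⟨g, LinearMap.ext fun x => ?_⟩
  have hgf : g (f x) = h ⟨f x, mem_range_self f x⟩ :=
    LinearMap.congr_fun hg ⟨f x, mem_range_self f x⟩
  simpa [hgf] using congr_arg Subtype.val (LinearMap.congr_fun hh ⟨f x, mem_range_self f x⟩)

theorem Matrix.exists_mul_mul_eq_self {F m n : Type*} [Field F] [Fintype m] [Fintype n]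
    [DecidableEq m] [DecidableEq n] (C : Matrix m n F) : ∃ G : Matrix n m F, C * G * C = C := by
  obtain ⟨g, hg⟩ := (toLin' C).exists_comp_comp_eq_self
  refine ⟨LinearMap.toMatrix' g, toLin'.injective ?_⟩
  simpa [toLin'_mul, LinearMap.comp_assoc] using hg

namespace Matrix

variable {F : Type*} [Field F] {m₁ m₂ n₁ n₂ : Type*} [Fintype n₁] [Fintype n₂]
  (A : Matrix m₁ n₁ F) (B : Matrix m₁ n₂ F) (C : Matrix m₂ n₁ F) (D : Matrix m₂ n₂ F)

theorem rank_eq_finrank_range_comp_add_finrank_inf_ker {m n V : Type*} [Fintype n]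
    [AddCommGroup V] [Module F V] (M : Matrix m n F) (f : (m → F) →ₗ[F] V) :
    M.rank = finrank F (range (f ∘ₗ M.mulVecLin)) + finrank F ↥(range M.mulVecLin ⊓ ker f) := by
  rw [range_comp, Submodule.finrank_map_add_finrank_inf_ker]
  rfl

theorem funLeft_inr_comp_mulVecLin_fromRows :
    funLeft F F Sum.inr ∘ₗ (fromRows A C).mulVecLin = C.mulVecLin := by
  ext
  simp [fromRows_mulVec, funLeft_apply]

theorem funLeft_inr_comp_mulVecLin_fromBlocks :
    funLeft F F Sum.inr ∘ₗ (fromBlocks A B C D).mulVecLin = (fromCols C D).mulVecLin := by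
  rw [← fromRows_fromCols_eq_fromBlocks, funLeft_inr_comp_mulVecLin_fromRows]

theorem range_mulVecLin_fromRows_le_fromBlocks :
    range (fromRows A C).mulVecLin ≤ range (fromBlocks A B C D).mulVecLin := by
  rintro _ ⟨x, rfl⟩
  exact ⟨Sum.elim x 0, by simp [← fromCols_fromRows_eq_fromBlocks]⟩

theorem rank_fromRows_eq_rank_add_finrank_inf_ker :
    (fromRows A C).rank =
      C.rank + finrank F ↥(range (fromRows A C).mulVecLin ⊓ ker (funLeft F F Sum.inr)) := by
  rw [rank_eq_finrank_range_comp_add_finrank_inf_ker _ (funLeft F F Sum.inr),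
    funLeft_inr_comp_mulVecLin_fromRows]
  rfl

theorem rank_fromBlocks_eq_rank_fromCols_add_finrank_inf_ker :
    (fromBlocks A B C D).rank =
      (fromCols C D).rank +
        finrank F ↥(range (fromBlocks A B C D).mulVecLin ⊓ ker (funLeft F F Sum.inr)) := by
  rw [rank_eq_finrank_range_comp_add_finrank_inf_ker _ (funLeft F F Sum.inr),
    funLeft_inr_comp_mulVecLin_fromBlocks]
  rfl

theorem rank_fromRows_add_rank_fromCols_le :
    (fromRows A C).rank + (fromCols C D).rank ≤ (fromBlocks A B C D).rank + C.rank := by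
  have hmono := Submodule.finrank_mono
    (inf_le_inf_right (ker (funLeft F F Sum.inr)) (range_mulVecLin_fromRows_le_fromBlocks A B C D))
  rw [rank_fromRows_eq_rank_add_finrank_inf_ker,
    rank_fromBlocks_eq_rank_fromCols_add_finrank_inf_ker]
  omega

variable [Fintype m₂] {C} {G : Matrix n₁ m₂ F}

theorem range_mulVecLin_fromBlocks_inf_ker_le (hG : C * G * C = C) :
    range (fromBlocks A (A * G * D) C D).mulVecLin ⊓ ker (funLeft F F Sum.inr) ≤
      range (fromRows A C).mulVecLin := by
  rintro _ ⟨⟨w, rfl⟩, hw⟩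
  obtain ⟨a, b, rfl⟩ : ∃ a b, w = Sum.elim a b := ⟨_, _, (Sum.elim_comp_inl_inr w).symm⟩
  have hbot : C *ᵥ a + D *ᵥ b = 0 := by
    simpa [fromBlocks_mulVec, funLeft_apply, funext_iff] using hw
  have hCGD : (C * (G * D)) *ᵥ b = D *ᵥ b := by
    rw [← Matrix.mul_assoc, ← mulVec_mulVec, eq_neg_of_add_eq_zero_right hbot, mulVec_neg,
      mulVec_mulVec, hG]
  refine ⟨a + G *ᵥ D *ᵥ b, ?_⟩
  simp [fromRows_mulVec, fromBlocks_mulVec, mulVec_add, hCGD, mulVec_mulVec, Matrix.mul_assoc,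
    Sum.elim_add_add]

theorem rank_fromBlocks_mul_mul_add_rank (hG : C * G * C = C) :
    (fromBlocks A (A * G * D) C D).rank + C.rank = (fromRows A C).rank + (fromCols C D).rank := by
  have hinf : range (fromBlocks A (A * G * D) C D).mulVecLin ⊓ ker (funLeft F F Sum.inr) =
      range (fromRows A C).mulVecLin ⊓ ker (funLeft F F Sum.inr) :=
    le_antisymm (le_inf (range_mulVecLin_fromBlocks_inf_ker_le A D hG) inf_le_right)
      (inf_le_inf_right _ (range_mulVecLin_fromRows_le_fromBlocks A _ C D))
  rw [rank_fromRows_eq_rank_add_finrank_inf_ker,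
    rank_fromBlocks_eq_rank_fromCols_add_finrank_inf_ker, hinf]
  omega

end Matrix

/-- Specialization of the 2×2 minimal rank completion formula under full
rank hypotheses: if `[T₁₁; T₂₁]` has full column rank and `[T₂₁ T₂₂]` has
full row rank, the minimal rank of `[[T₁₁, ?],[T₂₁, T₂₂]]` is
`μ₁ + ν₂ − rank T₂₁`. -/
theorem minRank_full_rank_case {F : Type*} [Field F] {ν₁ ν₂ μ₁ μ₂ : ℕ}
    (T₁₁ : Matrix (Fin ν₁) (Fin μ₁) F) (T₂₁ : Matrix (Fin ν₂) (Fin μ₁) F)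
    (T₂₂ : Matrix (Fin ν₂) (Fin μ₂) F)
    (hcol : (Matrix.fromRows T₁₁ T₂₁).rank = μ₁)
    (hrow : (Matrix.fromCols T₂₁ T₂₂).rank = ν₂) :
    sInf {r : ℕ | ∃ X : Matrix (Fin ν₁) (Fin μ₂) F,
        (Matrix.fromBlocks T₁₁ X T₂₁ T₂₂).rank = r} =
      μ₁ + ν₂ - T₂₁.rank := by
  obtain ⟨G, hG⟩ := T₂₁.exists_mul_mul_eq_self
  have hmin := rank_fromBlocks_mul_mul_add_rank T₁₁ T₂₂ hG
  rw [hcol, hrow] at hmin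
  refine le_antisymm (Nat.sInf_le ⟨T₁₁ * G * T₂₂, by omega⟩) (le_csInf ⟨_, 0, rfl⟩ ?_)
  rintro _ ⟨X, rfl⟩
  have hlower := rank_fromRows_add_rank_fromCols_le T₁₁ X T₂₁ T₂₂
  rw [hcol, hrow] at hlower
  omega
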